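/- Diagonal trace of the momentum flux correction (Lemma): Let ξ₀ ∈ ℝ. Let c : ℝ³ → ℂ be C¹, symmetric in its first and third arguments, with Im c(ξ,ξ,η) = 0 for all ξ,η (so that c(ξ₀,ξ₀,ξ₀) is real). Let a : ℝ² → ℂ be C¹ with a(ξ,η) = conj(a(η,ξ)) (so a(ξ₀,ξ₀) is real). Define p(ξ,η) = −(ξ + η − 2ξ₀)·a(ξ,η) and c⁴(ξ₁,ξ₂,ξ₃,ξ₄) = −(i/2)[c(ξ₁,ξ₂,ξ₃)p(ξ₁−ξ₂+ξ₃, ξ₄) + c(ξ₁,ξ₄,ξ₃)p(ξ₁−ξ₄+ξ₃, ξ₂) − conj(c(ξ₂,ξ₃,ξ₄))·p(ξ₁, ξ₂−ξ₃+ξ₄) − conj(c(ξ₂,ξ₁,ξ₄))·p(ξ₃, ξ₂−ξ₁+ξ₄)]. Suppose b, r : ℝ⁴ → ℂ are C¹ functions satisfying c⁴(ξ) + i·Δ⁴(ξ−ξ₀)²·b(ξ) = i·Δ⁴ξ·r(ξ) for all ξ ∈ ℝ⁴, where Δ⁴(ξ−ξ₀)² = (ξ₁−ξ₀)² − (ξ₂−ξ₀)²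 + (ξ₃−ξ₀)² − (ξ₄−ξ₀)². Then r(ξ₀,ξ₀,ξ₀,ξ₀) = a(ξ₀,ξ₀)·c(ξ₀,ξ₀,ξ₀). -/
import Mathlib


noncomputable section
open ComplexConjugate

/-- `Δ⁴ξ = ξ₁ − ξ₂ + ξ₃ − ξ₄`. -/
def Δ4 (ξ : Fin 4 → ℝ) : ℝ := ξ 0 - ξ 1 + ξ 2 - ξ 3

/-- `Δ⁴(ξ−ξ₀)² = (ξ₁−ξ₀)² − (ξ₂−ξ₀)² + (ξ₃−ξ₀)² − (ξ₄−ξ₀)²`. -/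
def Δ4sqShift (ξ0 : ℝ) (ξ : Fin 4 → ℝ) : ℝ :=
  (ξ 0 - ξ0) ^ 2 - (ξ 1 - ξ0) ^ 2 + (ξ 2 - ξ0) ^ 2 - (ξ 3 - ξ0) ^ 2

/-- The recentered momentum symbol `p(ξ,η) = −(ξ + η − 2ξ₀)·a(ξ,η)`. -/
def pSym (a : ℝ → ℝ → ℂ) (ξ0 ξ η : ℝ) : ℂ :=
  -((ξ + η - 2 * ξ0 : ℝ) : ℂ) * a ξ η

/-- The quartic momentum symbol `c⁴` built from `c`, `a` and `ξ₀`. -/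
def c4pSym (c : ℝ → ℝ → ℝ → ℂ) (a : ℝ → ℝ → ℂ) (ξ0 ξ1 ξ2 ξ3 ξ4 : ℝ) : ℂ :=
  -(Complex.I / 2) *
    (c ξ1 ξ2 ξ3 * pSym a ξ0 (ξ1 - ξ2 + ξ3) ξ4
      + c ξ1 ξ4 ξ3 * pSym a ξ0 (ξ1 - ξ4 + ξ3) ξ2
      - conj (c ξ2 ξ3 ξ4) * pSym a ξ0 ξ1 (ξ2 - ξ3 + ξ4)
      - conj (c ξ2 ξ1 ξ4) * pSym a ξ0 ξ3 (ξ2 - ξ1 + ξ4))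

/-- Diagonal trace of the momentum flux correction: if `C¹` functions
`b`, `r` satisfy `c⁴ + i Δ⁴(ξ−ξ₀)² b = i Δ⁴ξ r` everywhere, then on the full diagonal
`ξ = (ξ₀,ξ₀,ξ₀,ξ₀)` one has `r = a(ξ₀,ξ₀)·c(ξ₀,ξ₀,ξ₀)`. -/
theorem diagonal_trace_momentum (ξ0 : ℝ) (c : ℝ → ℝ → ℝ → ℂ)
    (hc1 : ContDiff ℝ 1 fun p : ℝ × ℝ × ℝ => c p.1 p.2.1 p.2.2)
    (hc_sym : ∀ ξ1 ξ2 ξ3, c ξ1 ξ2 ξ3 = c ξ3 ξ2 ξ1)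
    (hc_cons : ∀ ξ η : ℝ, (c ξ ξ η).im = 0)
    (a : ℝ → ℝ → ℂ)
    (ha1 : ContDiff ℝ 1 fun p : ℝ × ℝ => a p.1 p.2)
    (ha_herm : ∀ ξ η : ℝ, a ξ η = conj (a η ξ))
    (b r : (Fin 4 → ℝ) → ℂ)
    (hb1 : ContDiff ℝ 1 b) (hr1 : ContDiff ℝ 1 r)
    (hid : ∀ ξ : Fin 4 → ℝ,
      c4pSym c a ξ0 (ξ 0) (ξ 1) (ξ 2) (ξ 3)
          + Complex.I * (Δ4sqShift ξ0 ξ : ℂ) * b ξ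
        = Complex.I * (Δ4 ξ : ℂ) * r ξ) :
    r (fun _ => ξ0) = a ξ0 ξ0 * c ξ0 ξ0 ξ0 := by
  classical
  set ξf : ℝ → (Fin 4 → ℝ) := fun t => ![ξ0 + t, ξ0, ξ0, ξ0] with hξf
  have hξ0 : (fun _ => ξ0 : Fin 4 → ℝ) = ξf 0 := by
    funext i; fin_cases i <;> simp [ξf]
  set G : ℝ → ℂ := fun t =>
    -(1/2 : ℂ) * (-2 * c (ξ0+t) ξ0 ξ0 * a (ξ0+t) ξ0
      + conj (c ξ0 ξ0 ξ0) * a (ξ0+t) ξ0 - conj (c ξ0 (ξ0+t) ξ0) * a ξ0 (ξ0-t))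
      + (t:ℂ) * b (ξf t) with hGdef
  have key : ∀ t : ℝ, t ≠ 0 → r (ξf t) = G t := by
    intro t ht
    have h := hid (ξf t)
    have e0 : ξf t 0 = ξ0 + t := by simp [ξf]
    have e1 : ξf t 1 = ξ0 := by simp [ξf]
    have e2 : ξf t 2 = ξ0 := by simp [ξf]
    have e3 : ξf t 3 = ξ0 := by simp [ξf]
    have hΔ : Δ4 (ξf t) = t := by simp [Δ4, e0, e1, e2, e3]
    have hΔ2 : Δ4sqShift ξ0 (ξf t) = t^2 := by
      simp [Δ4sqShift, e0, e1, e2, e3]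
    rw [hΔ, hΔ2, e0, e1, e2, e3] at h
    have harg1 : ξ0 + t - ξ0 + ξ0 = ξ0 + t := by ring
    have harg2 : ξ0 - (ξ0 + t) + ξ0 = ξ0 - t := by ring
    have harg3 : ξ0 - ξ0 + ξ0 = ξ0 := by ring
    rw [c4pSym, harg1, harg2, harg3] at h
    simp only [pSym] at h
    have hIt : (Complex.I * (t:ℂ)) ≠ 0 := by
      simp [Complex.I_ne_zero, Complex.ofReal_eq_zero, ht]
    apply mul_left_cancel₀ hIt
    rw [← h, hGdef]
    push_cast
    ring
  have hξfc : Continuous ξf := by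
    apply continuous_pi
    intro i
    fin_cases i <;> simp [ξf]
    · exact continuous_const.add continuous_id
    · exact continuous_const
    · exact continuous_const
    · exact continuous_const
  have hGc : Continuous G := by
    have hcc := hc1.continuous
    have hac := ha1.continuous
    have h1 : Continuous fun t : ℝ => c (ξ0+t) ξ0 ξ0 :=
      hcc.comp (((continuous_const.add continuous_id).prodMk
        (continuous_const.prodMk continuous_const)))
    have h2 : Continuous fun t : ℝ => c ξ0 (ξ0+t) ξ0 :=
      hcc.comp ((continuous_const.prodMk
        ((continuous_const.add continuous_id).prodMk continuous_const)))
    have h2' : Continuous fun t : ℝ => conj (c ξ0 (ξ0+t) ξ0) := by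
      simp only [starRingEnd_apply]; exact h2.star
    have h3 : Continuous fun t : ℝ => a (ξ0+t) ξ0 :=
      hac.comp ((continuous_const.add continuous_id).prodMk continuous_const)
    have h4 : Continuous fun t : ℝ => a ξ0 (ξ0-t) :=
      hac.comp (continuous_const.prodMk (continuous_const.sub continuous_id))
    have h5 : Continuous fun t : ℝ => b (ξf t) := hb1.continuous.comp hξfc
    rw [hGdef]
    exact (continuous_const.mul ((((continuous_const.mul h1).mul h3).add
      (continuous_const.mul h3)).sub (h2'.mul h4))).add
      (Complex.continuous_ofReal.mul h5)
  have hrξ : Continuous fun t : ℝ => r (ξf t) := hr1.continuous.comp hξfc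
  have hlim1 : Filter.Tendsto (fun t : ℝ => r (ξf t)) (nhdsWithin 0 {0}ᶜ) (nhds (r (ξf 0))) :=
    (hrξ.tendsto 0).mono_left nhdsWithin_le_nhds
  have hlim2 : Filter.Tendsto (fun t : ℝ => r (ξf t)) (nhdsWithin 0 {0}ᶜ) (nhds (G 0)) := by
    refine Filter.Tendsto.congr' ?_ ((hGc.tendsto 0).mono_left nhdsWithin_le_nhds)
    filter_upwards [self_mem_nhdsWithin] with t ht
    exact (key t ht).symm
  have heq : r (ξf 0) = G 0 := tendsto_nhds_unique hlim1 hlim2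
  rw [hξ0, heq, hGdef]
  simp only [add_zero, sub_zero, Complex.ofReal_zero, zero_mul]
  ring
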